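/- arXiv:1502.07730 — 2 statements merged into one kernel-verified Lean document; each statement's English description precedes it below -/
import Mathlib

section
/- Let n be a positive integer and let w_1 ≤ w_2 ≤ … ≤ w_m be a weighing sequence for n, with partial sums R_i = w_1 + … + w_i and R_0 = 0. Then for every i with 1 ≤ i ≤ m, one has 3·R_{i−1} ≥ R_i − 1 (equivalently R_{i−1} ≥ (R_i − 1)/3). -/
/-!
Write `R = R_{i-1}` and `T = n - R` for the sum of the tail `w_i, …, w_m`, and suppose
`w_i ≥ 2R + 2`. In a weighing of `k = T - R - 1` the head contributes at least `-R`, so the tail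
contributes at least `T - 2R - 1 > T - w_i`. Every tail weight is at least `w_i`, so all of them
carry the sign `+1`; the tail then contributes exactly `T`, and the head would have to
contribute `-R - 1`.
-/

/-- `w 0, w 1, …, w (m-1)` (1-indexed as `w_1 ≤ … ≤ w_m` in the paper) is a
weighing sequence for `n`: a nondecreasing list of `m` positive integers summing
to `n` such that every integer `1 ≤ k ≤ n` can be written as
`k = u_1 w_1 + … + u_m w_m` with each `u_i ∈ {-1, 0, 1}`. -/
def IsWeighingSeq (n m : ℕ) (w : ℕ → ℕ) : Prop :=
  (∀ i, i < m → 0 < w i) ∧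
  (∀ i j, i ≤ j → j < m → w i ≤ w j) ∧
  (∑ i ∈ Finset.range m, w i) = n ∧
  ∀ k : ℤ, 1 ≤ k → k ≤ (n : ℤ) →
    ∃ u : ℕ → ℤ, (∀ i, u i = -1 ∨ u i = 0 ∨ u i = 1) ∧
      k = ∑ i ∈ Finset.range m, u i * (w i : ℤ)

open Finset

section SignedSum

variable {ι : Type*} {s : Finset ι} {u w : ι → ℤ}

theorem abs_sum_mul_le_sum (hu : ∀ j ∈ s, |u j| ≤ 1) (hw : ∀ j ∈ s, 0 ≤ w j) :
    |∑ j ∈ s, u j * w j| ≤ ∑ j ∈ s, w j :=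
  (abs_sum_le_sum_abs _ _).trans <| sum_le_sum fun j hj => by
    rw [abs_mul, abs_of_nonneg (hw j hj)]
    exact mul_le_of_le_one_left (hw j hj) (hu j hj)

theorem sum_mul_le_sum_sub_of_ne_one (hu : ∀ j ∈ s, |u j| ≤ 1) (hw : ∀ j ∈ s, 0 ≤ w j)
    {i : ι} (hi : i ∈ s) (hui : u i ≠ 1) :
    ∑ j ∈ s, u j * w j ≤ ∑ j ∈ s, w j - w i := by
  have hui' : u i ≤ 0 := by have := (abs_le.1 (hu i hi)).2; omega
  have hdefect : w i ≤ ∑ j ∈ s, (1 - u j) * w j :=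
    calc w i ≤ (1 - u i) * w i := le_mul_of_one_le_left (hw i hi) (by omega)
      _ ≤ ∑ j ∈ s, (1 - u j) * w j :=
        single_le_sum (fun j hj => mul_nonneg (by linarith [abs_le.1 (hu j hj)]) (hw j hj)) hi
  simp only [sub_mul, one_mul, sum_sub_distrib] at hdefect
  linarith

end SignedSum

theorem IsWeighingSeq.weight_le_two_mul_sum_add_one {n m : ℕ} {w : ℕ → ℕ}
    (hw : IsWeighingSeq n m w) {i : ℕ} (hi : i < m) :
    (w i : ℤ) ≤ 2 * ∑ j ∈ range i, (w j : ℤ) + 1 := by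
  obtain ⟨-, hmono, hsum, hrep⟩ := hw
  by_contra! hlarge
  set R := ∑ j ∈ range i, (w j : ℤ)
  set T := ∑ j ∈ Ico i m, (w j : ℤ)
  have hR : 0 ≤ R := by positivity
  have hRT : R + T = n := by rw [← hsum]; push_cast; exact sum_range_add_sum_Ico _ hi.le
  have hwT : (w i : ℤ) ≤ T :=
    single_le_sum (f := fun j => (w j : ℤ)) (fun j _ => by positivity) (mem_Ico.2 ⟨le_rfl, hi⟩)
  obtain ⟨u, hu, hk⟩ := hrep (T - R - 1) (by linarith) (by linarith)
  have hu' : ∀ j, |u j| ≤ 1 := fun j => by rcases hu j with h | h | h <;> simp [h]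
  have hw' : ∀ j, 0 ≤ (w j : ℤ) := fun j => by positivity
  rw [← sum_range_add_sum_Ico _ hi.le] at hk
  have hhead := abs_le.1 (abs_sum_mul_le_sum (s := range i) (fun j _ => hu' j) (fun j _ => hw' j))
  by_cases hdeficit : ∃ j ∈ Ico i m, u j ≠ 1
  · obtain ⟨j, hj, huj⟩ := hdeficit
    have htail := sum_mul_le_sum_sub_of_ne_one (fun j _ => hu' j) (fun j _ => hw' j) hj huj
    have hij : (w i : ℤ) ≤ w j := by exact_mod_cast hmono i j (mem_Ico.1 hj).1 (mem_Ico.1 hj).2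
    linarith
  · have htail : ∑ j ∈ Ico i m, u j * (w j : ℤ) = T :=
      sum_congr rfl fun j hj => by rw [not_not.1 fun h => hdeficit ⟨j, hj, h⟩, one_mul]
    linarith

theorem three_mul_prev_partial_sum_ge_general (n m : ℕ) (w : ℕ → ℕ)
    (hw : IsWeighingSeq n m w) (i : ℕ) (hi : i < m) :
    3 * ((∑ j ∈ Finset.range i, w j : ℕ) : ℤ) ≥
      ((∑ j ∈ Finset.range (i + 1), w j : ℕ) : ℤ) - 1 := by
  have := hw.weight_le_two_mul_sum_add_one hi
  push_cast [Finset.sum_range_succ]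
  linarith

/-- For any weighing sequence, `3 * R_{i-1} ≥ R_i - 1` (here `i` is 0-indexed:
`R_i` is the sum over `Finset.range (i+1)` and `R_{i-1}` over `Finset.range i`). -/
theorem three_mul_prev_partial_sum_ge (n m : ℕ) (w : ℕ → ℕ)
    (hn : 0 < n) (hw : IsWeighingSeq n m w) (i : ℕ) (hi : i < m) :
    3 * ((∑ j ∈ Finset.range i, w j : ℕ) : ℤ) ≥
      ((∑ j ∈ Finset.range (i + 1), w j : ℕ) : ℤ) - 1 :=
  three_mul_prev_partial_sum_ge_general n m w hw i hi
end

section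
/- Let m ≥ 2 and let n be an integer with (3^{m−1} + 1)/2 ≤ n ≤ (3^{m−1} + 1)/2 + 3^{m−2} (so every feasible partition of n has m parts). Then every feasible partition w_1 ≤ … ≤ w_m of n satisfies R_{m−1} = w_1 + … + w_{m−1} ≤ ⌊(2n + 3^{m−2} − 1)/4⌋. -/
/-- A feasible partition of `n`: a weighing sequence for `n` of minimal length. -/
def IsFeasible (n m : ℕ) (w : ℕ → ℕ) : Prop :=
  IsWeighingSeq n m w ∧ ∀ (m' : ℕ) (w' : ℕ → ℕ), IsWeighingSeq n m' w' → m ≤ m'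

/-!
Peeling off the largest weights one at a time shows, by downward induction, that every integer
in `(R_i - w_{i+1}, R_i]` is a signed sum of `w_1, …, w_i`;
since such a sum is at most `R_i` in absolute value, `w_{i+1} ≤ 2 R_i + 1`, hence
`2 R_i + 1 ≤ 3^i`. With `w_{m-1} ≤ w_m` this gives
`4 R_{m-1} = 2 R_{m-1} + 2 R_{m-2} + 2 w_{m-1} ≤ 2 n + 2 R_{m-2} ≤ 2 n + 3^{m-2} - 1`.
-/

open Finset

def IsSignedSum (w : ℕ → ℕ) (i : ℕ) (s : ℤ) : Prop :=
  ∃ u : ℕ → ℤ, (∀ j, u j = -1 ∨ u j = 0 ∨ u j = 1) ∧ s = ∑ j ∈ range i, u j * (w j : ℤ)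

namespace IsSignedSum

variable {w : ℕ → ℕ} {i : ℕ} {s : ℤ}

theorem abs_le (h : IsSignedSum w i s) : |s| ≤ ∑ j ∈ range i, (w j : ℤ) := by
  obtain ⟨u, hu, rfl⟩ := h
  refine (abs_sum_le_sum_abs _ _).trans (sum_le_sum fun j _ => ?_)
  rcases hu j with h | h | h <;> simp [h]

/-- Exceeding `w 0 + ⋯ + w (i-1)` forces the coefficient of `w i` to be `+1`. -/
theorem sub_of_succ (h : IsSignedSum w (i + 1) s) (hs : ∑ j ∈ range i, (w j : ℤ) < s) :
    IsSignedSum w i (s - w i) := by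
  obtain ⟨u, hu, rfl⟩ := h
  rw [sum_range_succ] at hs ⊢
  have hrest := le_of_abs_le (abs_le (w := w) (i := i) ⟨u, hu, rfl⟩)
  have hwi : (0 : ℤ) ≤ w i := by positivity
  rcases hu i with h | h | h <;> rw [h] at hs ⊢
  · linarith
  · linarith
  · exact ⟨u, hu, by ring⟩

end IsSignedSum

namespace IsWeighingSeq

variable {n m : ℕ} {w : ℕ → ℕ}

theorem isSignedSum (hw : IsWeighingSeq n m w) {k : ℤ} (hk₁ : 1 ≤ k) (hk₂ : k ≤ n) :
    IsSignedSum w m k :=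
  hw.2.2.2 k hk₁ hk₂

theorem isSignedSum_of_mem_Ioc (hw : IsWeighingSeq n m w) {i : ℕ} (hi : i < m) {s : ℤ}
    (hs : s ∈ Set.Ioc (∑ j ∈ range i, (w j : ℤ) - w i) (∑ j ∈ range i, (w j : ℤ))) :
    IsSignedSum w i s := by
  obtain ⟨m, rfl⟩ : ∃ k, m = k + 1 := ⟨m - 1, by omega⟩
  have hsucc : ∀ i, ∑ j ∈ range (i + 1), (w j : ℤ) = ∑ j ∈ range i, (w j : ℤ) + w i :=
    fun i => sum_range_succ _ i
  replace hi : i ≤ m := Nat.lt_succ_iff.mp hi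
  induction hi using Nat.decreasingInduction generalizing s with
  | self =>
    obtain ⟨hs₁, hs₂⟩ := hs
    have hn : ∑ j ∈ range m, (w j : ℤ) + w m = n := by
      rw [← hsucc, ← hw.2.2.1]; push_cast; rfl
    have hR : 0 ≤ ∑ j ∈ range m, (w j : ℤ) := by positivity
    have := hw.isSignedSum (k := s + w m) (by linarith) (by linarith)
    simpa using this.sub_of_succ (by linarith)
  | of_succ i hi ih =>
    obtain ⟨hs₁, hs₂⟩ := hs
    have hle : w i ≤ w (i + 1) := hw.2.1 i (i + 1) (by omega) (by omega)
    have := ih (s := s + w i) (by rw [hsucc, Set.mem_Ioc]; constructor <;> linarith)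
    simpa using this.sub_of_succ (by linarith)

theorem le_two_mul_sum_add_one (hw : IsWeighingSeq n m w) {i : ℕ} (hi : i < m) :
    w i ≤ 2 * ∑ j ∈ range i, w j + 1 := by
  have hpos : (1 : ℤ) ≤ w i := by exact_mod_cast hw.1 i hi
  have := (hw.isSignedSum_of_mem_Ioc hi (s := ∑ j ∈ range i, (w j : ℤ) - w i + 1)
    ⟨by linarith, by linarith⟩).abs_le
  rw [abs_le] at this
  zify
  linarith

theorem two_mul_sum_add_one_le_three_pow (hw : IsWeighingSeq n m w) {i : ℕ} (hi : i ≤ m) :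
    2 * ∑ j ∈ range i, w j + 1 ≤ 3 ^ i := by
  induction i with
  | zero => simp
  | succ i ih =>
    have := hw.le_two_mul_sum_add_one (i := i) (by omega)
    rw [sum_range_succ, pow_succ]
    linarith [ih (by omega)]

theorem four_mul_sum_add_one_le (hw : IsWeighingSeq n m w) (hm : 2 ≤ m) :
    4 * ∑ j ∈ range (m - 1), w j + 1 ≤ 2 * n + 3 ^ (m - 2) := by
  obtain ⟨m, rfl⟩ : ∃ k, m = k + 2 := ⟨m - 2, by omega⟩
  have hsum := hw.2.2.1
  have hmono := hw.2.1 m (m + 1) (by omega) (by omega)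
  have hpow := hw.two_mul_sum_add_one_le_three_pow (i := m) (by omega)
  rw [show m + 2 - 1 = m + 1 by omega, Nat.add_sub_cancel]
  simp only [sum_range_succ] at hsum ⊢
  omega

end IsWeighingSeq

theorem penultimate_partial_sum_le_floor_general (m n : ℕ) (hm : 2 ≤ m) :
    ∀ w : ℕ → ℕ, IsFeasible n m w →
      ((∑ j ∈ Finset.range (m - 1), w j : ℕ) : ℤ) ≤
        ⌊(2 * (n : ℚ) + 3 ^ (m - 2) - 1) / 4⌋ := by
  intro w hw
  have key : ((4 * ∑ j ∈ range (m - 1), w j + 1 : ℕ) : ℚ) ≤ ((2 * n + 3 ^ (m - 2) : ℕ) : ℚ) :=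
    Nat.cast_le.mpr (hw.1.four_mul_sum_add_one_le hm)
  rw [Int.le_floor, le_div_iff₀ (by norm_num)]
  push_cast at key ⊢
  linarith

/-- For `m ≥ 2` and `(3^(m-1) + 1)/2 ≤ n ≤ (3^(m-1) + 1)/2 + 3^(m-2)`
(stated doubled), every feasible partition of `n` with `m` parts satisfies
`R_(m-1) ≤ ⌊(2n + 3^(m-2) - 1) / 4⌋`. -/
theorem penultimate_partial_sum_le_floor (m n : ℕ) (hm : 2 ≤ m)
    (h1 : 3 ^ (m - 1) + 1 ≤ 2 * n) (h2 : 2 * n ≤ 3 ^ (m - 1) + 1 + 2 * 3 ^ (m - 2)) :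
    ∀ w : ℕ → ℕ, IsFeasible n m w →
      ((∑ j ∈ Finset.range (m - 1), w j : ℕ) : ℤ) ≤
        ⌊(2 * (n : ℚ) + 3 ^ (m - 2) - 1) / 4⌋ :=
  penultimate_partial_sum_le_floor_general m n hm
end
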